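/- Let a, b, c ∈ ℝ with c ≠ 0 (playing the roles of π_{n−2}, π_{n−1}, π_n), let ε ∈ ℂ, and let K: ℝ² → ℂ be any smooth function. Then the function S₀(r¹,r²,r³) = (r¹)⁴/(8c) + b(r¹)³/(4c²) + ( −3r²/(4c) − a/(2c²) )(r¹)² + (r³+ε)r¹/c + K( (r²c − b r¹)/c , (r³c − a r¹)/c ) satisfies the reduced Hamilton–Jacobi equation of the cubic-potential Benenti system, c ∂S₀/∂r¹ + b ∂S₀/∂r² + a ∂S₀/∂r³ − r³ + (3/2) r¹ r² − ½ (r¹)³ = ε, at every point of ℝ³. -/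

import Mathlib

noncomputable section

/-- the explicit formula `S₀` (with `c = πₙ ≠ 0`, `b = π_{n−1}`,
`a = π_{n−2}`, and an arbitrary smooth function `K` of two variables) solves the
reduced Hamilton–Jacobi equation of the cubic-potential Benenti system:
`c ∂S₀/∂r¹ + b ∂S₀/∂r² + a ∂S₀/∂r³ − r³ + (3/2) r¹r² − ½ (r¹)³ = ε` on all of `ℝ³`. -/
theorem general_solution_reduced_HJ_cubic
    (a b c : ℝ) (hc : c ≠ 0) (ε : ℂ)
    (K : ℝ × ℝ → ℂ) (hK : ContDiff ℝ (⊤ : ℕ∞) K)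
    (S₀ : (Fin 3 → ℝ) → ℂ)
    (hS₀ : S₀ = fun v : Fin 3 → ℝ =>
      (v 0 : ℂ) ^ 4 / (8 * (c : ℂ)) + (b : ℂ) * (v 0 : ℂ) ^ 3 / (4 * (c : ℂ) ^ 2) +
        (-(3 * (v 1 : ℂ)) / (4 * (c : ℂ)) - (a : ℂ) / (2 * (c : ℂ) ^ 2)) * (v 0 : ℂ) ^ 2 +
        ((v 2 : ℂ) + ε) * (v 0 : ℂ) / (c : ℂ) +
        K ((v 1 * c - b * v 0) / c, (v 2 * c - a * v 0) / c)) :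
    ∀ v : Fin 3 → ℝ,
      (c : ℂ) * fderiv ℝ S₀ v (Pi.single 0 1) +
        (b : ℂ) * fderiv ℝ S₀ v (Pi.single 1 1) +
        (a : ℂ) * fderiv ℝ S₀ v (Pi.single 2 1) -
        (v 2 : ℂ) + (3 / 2 : ℂ) * (v 0 : ℂ) * (v 1 : ℂ) - (1 / 2 : ℂ) * (v 0 : ℂ) ^ 3 = ε := by
  have hofReal : Differentiable ℝ (Complex.ofReal) := Complex.ofRealCLM.differentiable
  have hK' : Differentiable ℝ K := hK.differentiable (by simp)
  intro v
  set w : Fin 3 → ℝ := ![c, b, a] with hw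
  -- differentiability
  have hdiff : DifferentiableAt ℝ S₀ v := by
    rw [hS₀]
    simp only [div_eq_mul_inv]
    have := hofReal
    have := hK'
    fun_prop
  set D := fderiv ℝ S₀ v with hD
  -- combine the three directional derivatives into one along w
  have hcomb : (c : ℂ) * D (Pi.single 0 1) + (b : ℂ) * D (Pi.single 1 1) +
      (a : ℂ) * D (Pi.single 2 1) = D w := by
    have h0 : (c : ℂ) * D (Pi.single 0 1) = D (c • (Pi.single 0 1 : Fin 3 → ℝ)) := by
      rw [D.map_smul]; simp [Complex.real_smul]
    have h1 : (b : ℂ) * D (Pi.single 1 1) = D (b • (Pi.single 1 1 : Fin 3 → ℝ)) := by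
      rw [D.map_smul]; simp [Complex.real_smul]
    have h2 : (a : ℂ) * D (Pi.single 2 1) = D (a • (Pi.single 2 1 : Fin 3 → ℝ)) := by
      rw [D.map_smul]; simp [Complex.real_smul]
    rw [h0, h1, h2, ← D.map_add, ← D.map_add]
    congr 1
    funext i
    fin_cases i <;> simp [hw, Pi.single_apply]
  -- the line t ↦ v + t • w
  have hline : HasDerivAt (fun t : ℝ => v + t • w) w 0 := by
    simpa using ((hasDerivAt_id (0 : ℝ)).smul_const w).const_add v
  have hFD : HasFDerivAt S₀ D (v + (0 : ℝ) • w) := by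
    simpa using hdiff.hasFDerivAt
  have hg : HasDerivAt (fun t : ℝ => S₀ (v + t • w)) (D w) 0 :=
    hFD.comp_hasDerivAt 0 hline
  -- rewrite the composed function explicitly
  have hfun : (fun t : ℝ => S₀ (v + t • w)) =
    (fun t : ℝ =>
      ((v 0 : ℂ) + (t : ℂ) * c) * ((v 0 : ℂ) + (t : ℂ) * c) * ((v 0 : ℂ) + (t : ℂ) * c) *
          ((v 0 : ℂ) + (t : ℂ) * c) / (8 * (c : ℂ)) +
        (b : ℂ) * (((v 0 : ℂ) + (t : ℂ) * c) * ((v 0 : ℂ) + (t : ℂ) * c) *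
          ((v 0 : ℂ) + (t : ℂ) * c)) / (4 * (c : ℂ) ^ 2) +
        (-(3 * ((v 1 : ℂ) + (t : ℂ) * b)) / (4 * (c : ℂ)) - (a : ℂ) / (2 * (c : ℂ) ^ 2)) *
          (((v 0 : ℂ) + (t : ℂ) * c) * ((v 0 : ℂ) + (t : ℂ) * c)) +
        (((v 2 : ℂ) + (t : ℂ) * a) + ε) * ((v 0 : ℂ) + (t : ℂ) * c) / (c : ℂ) +
        K ((v 1 * c - b * v 0) / c, (v 2 * c - a * v 0) / c)) := by
    funext t
    rw [hS₀]
    simp only [Pi.add_apply, Pi.smul_apply, smul_eq_mul, hw, Matrix.cons_val_zero,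
      Matrix.cons_val_one, Matrix.head_cons, Matrix.cons_val_two, Matrix.tail_cons]
    rw [show (v 1 + t * b) * c - b * (v 0 + t * c) = v 1 * c - b * v 0 from by ring,
        show (v 2 + t * a) * c - a * (v 0 + t * c) = v 2 * c - a * v 0 from by ring]
    push_cast
    ring
  -- explicit derivative of the explicit function at 0
  have ht : HasDerivAt (fun t : ℝ => ((t : ℝ) : ℂ)) 1 0 := by
    simpa using (hasDerivAt_id (0 : ℝ)).ofReal_comp
  have hx : HasDerivAt (fun t : ℝ => (v 0 : ℂ) + (t : ℂ) * c) (c : ℂ) 0 := by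
    simpa using (ht.mul_const (c : ℂ)).const_add (v 0 : ℂ)
  have hy : HasDerivAt (fun t : ℝ => (v 1 : ℂ) + (t : ℂ) * b) (b : ℂ) 0 := by
    simpa using (ht.mul_const (b : ℂ)).const_add (v 1 : ℂ)
  have hz : HasDerivAt (fun t : ℝ => (v 2 : ℂ) + (t : ℂ) * a) (a : ℂ) 0 := by
    simpa using (ht.mul_const (a : ℂ)).const_add (v 2 : ℂ)
  have hx2 := hx.mul hx
  have hx3 := hx2.mul hx
  have hx4 := hx3.mul hx
  have ht1 := hx4.div_const (8 * (c : ℂ))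
  have ht2 := (hx3.const_mul (b : ℂ)).div_const (4 * (c : ℂ) ^ 2)
  have ht3a := ((hy.const_mul (3 : ℂ)).neg.div_const (4 * (c : ℂ))).sub_const
      ((a : ℂ) / (2 * (c : ℂ) ^ 2))
  have ht3 := ht3a.mul hx2
  have ht4 := ((hz.add_const ε).mul hx).div_const (c : ℂ)
  have hg2 := (((ht1.add ht2).add ht3).add ht4).add_const
      (K ((v 1 * c - b * v 0) / c, (v 2 * c - a * v 0) / c))
  rw [hfun] at hg
  have hEq := hg.unique hg2
  have hc' : (c : ℂ) ≠ 0 := by exact_mod_cast hc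
  simp only [Pi.mul_apply, Pi.neg_apply, Complex.ofReal_zero, zero_mul, add_zero] at hEq
  have hclean : D w = (v 0 : ℂ) ^ 3 / 2 - (3 / 2) * (v 0 : ℂ) * (v 1 : ℂ) + (v 2 : ℂ) + ε := by
    rw [hEq]
    have h8 : (8 : ℂ) * c ≠ 0 := by simp [hc']
    have h4 : (4 : ℂ) * (c : ℂ) ^ 2 ≠ 0 := by simp [hc']
    have h4c : (4 : ℂ) * c ≠ 0 := by simp [hc']
    have h2 : (2 : ℂ) * (c : ℂ) ^ 2 ≠ 0 := by simp [hc']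
    have h : (c : ℂ) ^ 8 * ((c : ℂ))⁻¹ ^ 8 = 1 := by
      rw [← mul_pow, mul_inv_cancel₀ hc', one_pow]
    field_simp
    linear_combination (0 : ℂ) * h
  rw [hcomb, hclean]
  ring
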